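/- For σ ∈ S_n, define the r-descent set rDes(σ) = {i ∈ [n-1] : σ(i) ≥ σ(i+1) + r} and the set rInv(σ) = {(i,j) : 1 ≤ i < j ≤ n, σ(i) > σ(j) > σ(i) - r}, and the r-major index rmaj(σ) = Σ_{i ∈ rDes(σ)} i + |rInv(σ)|. Define A[n,k;r] = Σ_{σ ∈ S_n, |rDes(σ)|=k} q^(rmaj(σ)). Then for r ≥ 1 and 0 ≤ k ≤ n: A[n+r, k; r] = [r]! · E_{n,k}(1, r, q), where E_{n,k}(α,β,q) is defined by E_{0,0}=1, E_{n,k} = q^(β+k-1)[n-k+α]E_{n-1,k-1} + [k+β]E_{n-1,k}. -/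

import Mathlib

open Finset

def pval {n : ℕ} (σ : Equiv.Perm (Fin n)) (i : ℕ) : ℕ :=
  if h : i < n then (σ ⟨i, h⟩ : ℕ) else 0

def desSet {n : ℕ} (σ : Equiv.Perm (Fin n)) : Finset ℕ :=
  (Finset.range (n - 1)).filter (fun i => pval σ (i + 1) < pval σ i)

def des {n : ℕ} (σ : Equiv.Perm (Fin n)) : ℕ := (desSet σ).card

def maj {n : ℕ} (σ : Equiv.Perm (Fin n)) : ℕ := ∑ i ∈ desSet σ, (i + 1)

def lrmin {n : ℕ} (σ : Equiv.Perm (Fin n)) : ℕ :=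
  ((Finset.range n).filter (fun i => ∀ j ∈ Finset.range i, pval σ i < pval σ j)).card

def rlmin {n : ℕ} (σ : Equiv.Perm (Fin n)) : ℕ :=
  ((Finset.range n).filter
    (fun i => ∀ j ∈ Finset.range n, i < j → pval σ i < pval σ j)).card

noncomputable section

abbrev K : Type := RatFunc ℚ

def qq : K := RatFunc.X

def qint (m : ℕ) : K := ∑ i ∈ Finset.range m, qq ^ i

def qfact (m : ℕ) : K := ∏ i ∈ Finset.range m, qint (i + 1)

def qbinom (a b : ℕ) : K := qfact a / (qfact b * qfact (a - b))

def E (α β : ℕ) : ℕ → ℕ → K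
  | 0, k => if k = 0 then 1 else 0
  | n + 1, 0 => qint β * E α β n 0
  | n + 1, k + 1 =>
      qq ^ (β + k) * qint (n - k + α) * E α β n k + qint (k + 1 + β) * E α β n (k + 1)

def poch (N : ℕ) : PowerSeries K :=
  ∏ i ∈ Finset.range N, (1 - PowerSeries.C (qq ^ i) * PowerSeries.X)

def rdesSet {m : ℕ} (r : ℕ) (σ : Equiv.Perm (Fin m)) : Finset ℕ :=
  (Finset.range (m - 1)).filter (fun i => pval σ (i + 1) + r ≤ pval σ i)

def rdes {m : ℕ} (r : ℕ) (σ : Equiv.Perm (Fin m)) : ℕ := (rdesSet r σ).card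

def rinv {m : ℕ} (r : ℕ) (σ : Equiv.Perm (Fin m)) : ℕ :=
  ((Finset.range m ×ˢ Finset.range m).filter
    (fun p => p.1 < p.2 ∧ pval σ p.2 < pval σ p.1 ∧ pval σ p.1 < pval σ p.2 + r)).card

def rmaj {m : ℕ} (r : ℕ) (σ : Equiv.Perm (Fin m)) : ℕ :=
  (∑ i ∈ rdesSet r σ, (i + 1)) + rinv r σ

def Aq (m k r : ℕ) : K :=
  ∑ σ ∈ (Finset.univ : Finset (Equiv.Perm (Fin m))).filter (fun σ => rdes r σ = k),
    qq ^ (rmaj r σ)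

/-!
Every permutation of `Fin (m + 1)` arises exactly once by inserting the largest value `m` into
one of the `m + 1` slots of a permutation `τ` of `Fin m`. Call a slot stable if the insertion
creates no new r-descent there. Inserting into a stable slot raises `rmaj` by the number of
stable slots to its right; inserting into an unstable slot raises `rdes` by one and `rmaj` by
the number of stable slots plus the number of unstable slots to its left. Since `τ` has
`rdes τ + min r (m + 1)` stable slots, the insertions contribute `[rdes τ + r]` and
`q ^ (rdes τ + r) [m + 1 - rdes τ - r]` once `r ≤ m`, which is the recurrence of `E 1 r`; for
`m ≤ r` every slot is stable, so `Aq m 0 r = [m]!` is the initial value.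
-/

lemma sum_comp_eq_sum_range_of_injOn {α M : Type*} [AddCommMonoid M] {S : Finset α}
    {f : α → ℕ} (hf : Set.InjOn f S) (hlt : ∀ a ∈ S, f a < #S) (g : ℕ → M) :
    ∑ a ∈ S, g (f a) = ∑ i ∈ range #S, g i := by
  rw [← sum_image hf]
  congr 1
  refine eq_of_subset_of_card_le (fun i hi => ?_) (by rw [card_range, card_image_of_injOn hf])
  obtain ⟨a, ha, rfl⟩ := mem_image.mp hi
  exact mem_range.mpr (hlt a ha)

section Rank

variable {α M : Type*} [LinearOrder α] [AddCommMonoid M]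

lemma sum_card_filter_lt (S : Finset α) (g : ℕ → M) :
    ∑ a ∈ S, g #{b ∈ S | b < a} = ∑ i ∈ range #S, g i := by
  refine sum_comp_eq_sum_range_of_injOn
    (StrictMonoOn.injOn (f := fun a => #{b ∈ S | b < a}) fun a ha b hb hab => ?_)
    (fun a ha => card_lt_card (filter_ssubset.mpr ⟨a, ha, lt_irrefl a⟩)) g
  refine card_lt_card ((ssubset_iff_of_subset fun c hc => ?_).mpr ⟨a, ?_, by simp⟩)
  · simp only [mem_filter] at hc ⊢
    exact ⟨hc.1, hc.2.trans hab⟩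
  · simpa [hab] using ha

lemma sum_card_filter_gt (S : Finset α) (g : ℕ → M) :
    ∑ a ∈ S, g #{b ∈ S | a < b} = ∑ i ∈ range #S, g i := by
  refine sum_comp_eq_sum_range_of_injOn
    (StrictAntiOn.injOn (f := fun a => #{b ∈ S | a < b}) fun a ha b hb hab => ?_)
    (fun a ha => card_lt_card (filter_ssubset.mpr ⟨a, ha, lt_irrefl a⟩)) g
  refine card_lt_card ((ssubset_iff_of_subset fun c hc => ?_).mpr ⟨b, ?_, by simp⟩)
  · simp only [mem_filter] at hc ⊢
    exact ⟨hc.1, hab.trans hc.2⟩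
  · simpa [hab] using hb

lemma card_filter_le_eq_card_filter_lt_add_one {S : Finset α} {a : α} (ha : a ∈ S) :
    #{b ∈ S | a ≤ b} = #{b ∈ S | a < b} + 1 := by
  rw [← card_insert_of_notMem (by simp : a ∉ {b ∈ S | a < b})]
  congr 1
  ext b
  simp only [mem_filter, mem_insert, le_iff_lt_or_eq]
  constructor
  · rintro ⟨hb, hab | rfl⟩ <;> simp_all
  · rintro (rfl | ⟨hb, hab⟩) <;> simp_all

end Rank

lemma card_filter_sdiff_lt_add_card_filter_lt (S : Finset ℕ) {n p : ℕ} (hp : p ≤ n) :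
    #{q ∈ range n \ S | q < p} + #{q ∈ S | q < p} = p := by
  have h₁ : {q ∈ range n \ S | q < p} = range p \ S := by
    ext q
    simp only [mem_filter, mem_sdiff, mem_range]
    exact ⟨fun h => ⟨h.2, h.1.2⟩, fun h => ⟨⟨by omega, h.2⟩, h.1⟩⟩
  have h₂ : {q ∈ S | q < p} = range p ∩ S := by
    ext q
    simp only [mem_filter, mem_inter, mem_range]
    tauto
  rw [h₁, h₂, card_sdiff_add_card_inter, card_range]

open Equiv

section Permutations

variable {m r : ℕ}

lemma pval_lt (τ : Perm (Fin m)) {j : ℕ} (hj : j < m) : pval τ j < m := by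
  simp [pval, hj]

lemma pval_inv_pval (τ : Perm (Fin m)) {j : ℕ} (hj : j < m) : pval τ⁻¹ (pval τ j) = j := by
  simp [pval, hj]

lemma card_filter_pval (τ : Perm (Fin m)) (Q : ℕ → Prop) [DecidablePred Q] :
    #{j ∈ range m | Q (pval τ j)} = #{v ∈ range m | Q v} := by
  refine card_nbij' (pval τ) (pval τ⁻¹) ?_ ?_ ?_ ?_ <;> intro j hj <;>
    simp only [mem_coe, mem_filter, mem_range] at hj ⊢
  · exact ⟨pval_lt τ hj.1, hj.2⟩
  · have := pval_inv_pval τ⁻¹ hj.1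
    rw [inv_inv] at this
    exact ⟨pval_lt τ⁻¹ hj.1, by rw [this]; exact hj.2⟩
  · exact pval_inv_pval τ hj.1
  · simpa using pval_inv_pval τ⁻¹ hj.1

lemma mem_rdesSet {M : ℕ} (σ : Perm (Fin M)) (i : ℕ) :
    i ∈ rdesSet r σ ↔ i + 1 < M ∧ pval σ (i + 1) + r ≤ pval σ i := by
  simp only [rdesSet, mem_filter, mem_range]
  omega

lemma insertNth_last_castSucc_injective (τ : Perm (Fin m)) (p : Fin (m + 1)) :
    Function.Injective (Fin.insertNth p (Fin.last m) (Fin.castSucc ∘ τ)) := by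
  intro i j h
  obtain hi | ⟨i, rfl⟩ := Fin.eq_self_or_eq_succAbove p i <;>
    obtain hj | ⟨j, rfl⟩ := Fin.eq_self_or_eq_succAbove p j <;>
    simp_all [(Fin.castSucc_ne_last _).symm]

def insertMax (τ : Perm (Fin m)) (p : Fin (m + 1)) : Perm (Fin (m + 1)) :=
  Equiv.ofBijective _ (Finite.injective_iff_bijective.mp (insertNth_last_castSucc_injective τ p))

@[simp] lemma insertMax_apply_succAbove (τ : Perm (Fin m)) (p : Fin (m + 1)) (i : Fin m) :
    insertMax τ p (p.succAbove i) = (τ i).castSucc := by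
  simp [insertMax]

@[simp] lemma insertMax_apply_self (τ : Perm (Fin m)) (p : Fin (m + 1)) :
    insertMax τ p p = Fin.last m := by
  simp [insertMax]

lemma insertMax_bijective :
    Function.Bijective (fun x : Perm (Fin m) × Fin (m + 1) => insertMax x.1 x.2) := by
  refine (Fintype.bijective_iff_injective_and_card _).mpr ⟨?_, ?_⟩
  · rintro ⟨τ, p⟩ ⟨τ', p'⟩ h
    have hp : p = p' := by
      by_contra hne
      obtain ⟨i, rfl⟩ := Fin.exists_succAbove_eq hne
      have := congr($h (p'.succAbove i))
      simp only [insertMax_apply_self, insertMax_apply_succAbove] at this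
      exact Fin.castSucc_ne_last _ this.symm
    subst hp
    refine Prod.ext (Equiv.ext fun i => ?_) rfl
    simpa using congr($h (p.succAbove i))
  · simp [Fintype.card_perm, Nat.factorial_succ, mul_comm]

lemma pval_insertMax_of_lt (τ : Perm (Fin m)) (p : Fin (m + 1)) {i : ℕ} (h : i < p) :
    pval (insertMax τ p) i = pval τ i := by
  have hi : i < m := by omega
  have : (⟨i, by omega⟩ : Fin (m + 1)) = p.succAbove ⟨i, hi⟩ := by
    rw [Fin.succAbove_of_castSucc_lt _ _ h]; rfl
  simp [pval, hi, show i < m + 1 by omega, this]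

lemma pval_insertMax_self (τ : Perm (Fin m)) (p : Fin (m + 1)) :
    pval (insertMax τ p) p = m := by
  simp [pval, p.isLt]

lemma pval_insertMax_succ (τ : Perm (Fin m)) (p : Fin (m + 1)) {i : ℕ} (h : p ≤ i) :
    pval (insertMax τ p) (i + 1) = pval τ i := by
  by_cases hi : i < m
  · have : (⟨i + 1, by omega⟩ : Fin (m + 1)) = p.succAbove ⟨i, hi⟩ := by
      rw [Fin.succAbove_of_le_castSucc _ _ h]; rfl
    simp [pval, hi, this]
  · simp [pval, hi]

lemma pval_insertMax_skip (τ : Perm (Fin m)) (p : Fin (m + 1)) (i : ℕ) :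
    pval (insertMax τ p) (if i < p then i else i + 1) = pval τ i := by
  split_ifs with h
  · exact pval_insertMax_of_lt τ p h
  · exact pval_insertMax_succ τ p (not_lt.mp h)

/-- Slot `p ≤ m` of `τ` is the gap in front of position `p` (slot `m` is the end), where
`insertMax τ p` puts `m`; the r-descent at `d` sits at slot `d + 1`. -/
def descentSlots (r : ℕ) (τ : Perm (Fin m)) : Finset ℕ :=
  (rdesSet r τ).image (· + 1)

def bigPositions (r : ℕ) (τ : Perm (Fin m)) : Finset ℕ :=
  {j ∈ range m | m < pval τ j + r}

/-- Inserting `m` creates a new r-descent except at the end, right behind an r-descent (which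
then just moves one step right), and in front of one of the `r - 1` largest values. -/
def stableSlots (r : ℕ) (τ : Perm (Fin m)) : Finset ℕ :=
  insert m (descentSlots r τ ∪ bigPositions r τ)

lemma mem_stableSlots {τ : Perm (Fin m)} {p : ℕ} :
    p ∈ stableSlots r τ ↔
      p = m ∨ (∃ d ∈ rdesSet r τ, d + 1 = p) ∨ (p < m ∧ m < pval τ p + r) := by
  simp [stableSlots, descentSlots, bigPositions]

lemma stableSlots_subset_range (τ : Perm (Fin m)) : stableSlots r τ ⊆ range (m + 1) := by
  intro q hq
  rw [mem_range]
  rcases mem_stableSlots.mp hq with rfl | ⟨d, hd, rfl⟩ | ⟨hq, -⟩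
  · omega
  · have := (mem_rdesSet τ d).mp hd
    omega
  · omega

lemma card_bigPositions (τ : Perm (Fin m)) : #(bigPositions r τ) = min (r - 1) m := by
  rw [bigPositions, card_filter_pval τ (fun v => m < v + r),
    show {v ∈ range m | m < v + r} = Ico (m + 1 - r) m by ext v; simp only [mem_filter, mem_range, mem_Ico]; omega,
    Nat.card_Ico]
  omega

lemma disjoint_descentSlots_bigPositions (τ : Perm (Fin m)) :
    Disjoint (descentSlots r τ) (bigPositions r τ) := by
  refine disjoint_left.mpr fun j hj hbig => ?_
  obtain ⟨d, hd, rfl⟩ := mem_image.mp hj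
  rw [mem_rdesSet] at hd
  have := pval_lt τ (j := d) (by omega)
  simp only [bigPositions, mem_filter] at hbig
  omega

lemma notMem_descentSlots_union_bigPositions (τ : Perm (Fin m)) :
    m ∉ descentSlots r τ ∪ bigPositions r τ := by
  simp only [descentSlots, bigPositions, mem_union, mem_image, mem_rdesSet, mem_filter, mem_range]
  omega

lemma card_stableSlots (hr : 1 ≤ r) (τ : Perm (Fin m)) :
    #(stableSlots r τ) = rdes r τ + min r (m + 1) := by
  rw [stableSlots, card_insert_of_notMem (notMem_descentSlots_union_bigPositions τ),
    card_union_of_disjoint (disjoint_descentSlots_bigPositions τ), descentSlots,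
    card_image_of_injective _ (add_left_injective 1), card_bigPositions, rdes]
  omega

lemma card_filter_le_stableSlots (τ : Perm (Fin m)) {p : ℕ} (hp : p ≤ m) :
    #{q ∈ stableSlots r τ | p ≤ q} =
      #{d ∈ rdesSet r τ | p ≤ d + 1} + #{j ∈ bigPositions r τ | p ≤ j} + 1 := by
  rw [stableSlots, filter_insert, if_pos hp,
    card_insert_of_notMem fun h => notMem_descentSlots_union_bigPositions τ (mem_filter.mp h).1,
    filter_union, card_union_of_disjoint
      (disjoint_filter_filter (disjoint_descentSlots_bigPositions τ)),
    descentSlots, filter_image, card_image_of_injective _ (add_left_injective 1)]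

lemma ite_succ_lt_injective (p : ℕ) :
    Function.Injective fun d : ℕ => if d + 1 < p then d else d + 1 := by
  intro a b h
  simp only at h
  split_ifs at h <;> omega

lemma mem_rdesSet_insertMax_of_succ_lt (τ : Perm (Fin m)) (p : Fin (m + 1)) {i : ℕ}
    (h : i + 1 < p) : i ∈ rdesSet r (insertMax τ p) ↔ i ∈ rdesSet r τ := by
  rw [mem_rdesSet, mem_rdesSet, pval_insertMax_of_lt _ _ h, pval_insertMax_of_lt _ _ (by omega)]
  omega

lemma mem_rdesSet_insertMax_succ (τ : Perm (Fin m)) (p : Fin (m + 1)) {i : ℕ} (h : p ≤ i) :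
    i + 1 ∈ rdesSet r (insertMax τ p) ↔ i ∈ rdesSet r τ := by
  rw [mem_rdesSet, mem_rdesSet, pval_insertMax_succ _ _ h, pval_insertMax_succ _ _ (by omega)]
  omega

lemma mem_rdesSet_insertMax_self (τ : Perm (Fin m)) (p : Fin (m + 1)) :
    (p : ℕ) ∈ rdesSet r (insertMax τ p) ↔ (p : ℕ) < m ∧ pval τ p + r ≤ m := by
  rw [mem_rdesSet, pval_insertMax_succ _ _ le_rfl, pval_insertMax_self]
  omega

lemma notMem_rdesSet_insertMax_of_succ_eq (τ : Perm (Fin m)) (p : Fin (m + 1)) {i : ℕ}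
    (h : i + 1 = p) : i ∉ rdesSet r (insertMax τ p) := by
  have := pval_lt τ (j := i) (by omega)
  rw [mem_rdesSet, h, pval_insertMax_self, pval_insertMax_of_lt _ _ (by omega)]
  omega

lemma mem_image_ite_succ_lt {D : Finset ℕ} {p i : ℕ} :
    i ∈ D.image (fun d => if d + 1 < p then d else d + 1) ↔
      i + 1 < p ∧ i ∈ D ∨ p ≤ i ∧ ∃ d ∈ D, d + 1 = i := by
  rw [mem_image]
  constructor
  · rintro ⟨d, hd, rfl⟩
    split_ifs with h
    · exact Or.inl ⟨h, hd⟩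
    · exact Or.inr ⟨by omega, d, hd, rfl⟩
  · rintro (⟨h, hi⟩ | ⟨h, d, hd, rfl⟩)
    · exact ⟨i, hi, if_pos h⟩
    · exact ⟨d, hd, if_neg (by omega)⟩

lemma rdesSet_insertMax (τ : Perm (Fin m)) (p : Fin (m + 1)) :
    rdesSet r (insertMax τ p) =
      (rdesSet r τ).image (fun d => if d + 1 < (p : ℕ) then d else d + 1) ∪
        if (p : ℕ) ∈ stableSlots r τ then ∅ else {(p : ℕ)} := by
  ext i
  have hnew : i ∈ (if (p : ℕ) ∈ stableSlots r τ then (∅ : Finset ℕ) else {(p : ℕ)}) ↔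
      i = p ∧ (p : ℕ) ∉ stableSlots r τ := by
    split_ifs <;> simp [*]
  rw [mem_union, mem_image_ite_succ_lt, hnew]
  rcases lt_trichotomy (i + 1) p with h | h | h
  · simp [mem_rdesSet_insertMax_of_succ_lt τ p h, h, show ¬(p : ℕ) ≤ i by omega,
      show i ≠ p by omega]
  · simp [notMem_rdesSet_insertMax_of_succ_eq τ p h, show ¬i + 1 < p by omega,
      show ¬(p : ℕ) ≤ i by omega, show i ≠ p by omega]
  obtain rfl | hpi := eq_or_lt_of_le (Nat.le_of_lt_succ h)
  · rw [mem_rdesSet_insertMax_self, mem_stableSlots]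
    by_cases hslot : ∃ d ∈ rdesSet r τ, d + 1 = p
    · obtain ⟨d, hd, hdp⟩ := hslot
      have := (mem_rdesSet τ d).mp hd
      have := pval_lt τ (j := d) (by omega)
      exact ⟨fun _ => Or.inl (Or.inr ⟨le_rfl, d, hd, hdp⟩), fun _ => by rw [← hdp]; omega⟩
    · have := p.isLt
      simp only [hslot, show ¬(p : ℕ) + 1 < p by omega, false_and, and_false, false_or, true_and]
      omega
  · obtain ⟨j, rfl⟩ : ∃ j, i = j + 1 := ⟨i - 1, by omega⟩
    simp [mem_rdesSet_insertMax_succ τ p (show (p : ℕ) ≤ j by omega),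
      show ¬j + 1 + 1 < p by omega, show (p : ℕ) ≤ j + 1 by omega, show j + 1 ≠ p by omega]

lemma sum_rdesSet_insertMax {M : Type*} [AddCommMonoid M] (τ : Perm (Fin m)) (p : Fin (m + 1))
    (f : ℕ → M) :
    ∑ i ∈ rdesSet r (insertMax τ p), f i =
      ∑ d ∈ rdesSet r τ, f (if d + 1 < (p : ℕ) then d else d + 1) +
        if (p : ℕ) ∈ stableSlots r τ then 0 else f p := by
  rw [rdesSet_insertMax, sum_union, sum_image (ite_succ_lt_injective p).injOn,
    apply_ite (∑ i ∈ ·, f i), sum_empty, sum_singleton]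
  split_ifs with hp
  · exact disjoint_empty_right _
  · refine disjoint_singleton_right.mpr fun h => hp ?_
    obtain ⟨d, hd, hdp⟩ := mem_image.mp h
    have := (mem_rdesSet τ d).mp hd
    exact mem_stableSlots.mpr (Or.inr (Or.inl ⟨d, hd, by split_ifs at hdp <;> omega⟩))

lemma rdes_insertMax (τ : Perm (Fin m)) (p : Fin (m + 1)) :
    rdes r (insertMax τ p) = rdes r τ + if (p : ℕ) ∈ stableSlots r τ then 0 else 1 := by
  simp only [rdes, card_eq_sum_ones, sum_rdesSet_insertMax τ p (fun _ => 1)]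

lemma sum_succ_rdesSet_insertMax (τ : Perm (Fin m)) (p : Fin (m + 1)) :
    ∑ i ∈ rdesSet r (insertMax τ p), (i + 1) =
      ∑ d ∈ rdesSet r τ, (d + 1) + #{d ∈ rdesSet r τ | (p : ℕ) ≤ d + 1} +
        if (p : ℕ) ∈ stableSlots r τ then 0 else (p : ℕ) + 1 := by
  rw [sum_rdesSet_insertMax, card_filter, ← sum_add_distrib]
  congr 1
  refine sum_congr rfl fun d _ => ?_
  split_ifs <;> omega

def rinvPairs {M : ℕ} (r : ℕ) (σ : Perm (Fin M)) : Finset (ℕ × ℕ) :=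
  {x ∈ range M ×ˢ range M |
    x.1 < x.2 ∧ pval σ x.2 < pval σ x.1 ∧ pval σ x.1 < pval σ x.2 + r}

lemma rinv_eq_card_rinvPairs {M : ℕ} (σ : Perm (Fin M)) : rinv r σ = #(rinvPairs r σ) := rfl

lemma mem_rinvPairs {M : ℕ} {σ : Perm (Fin M)} {a b : ℕ} :
    (a, b) ∈ rinvPairs r σ ↔
      b < M ∧ a < b ∧ pval σ b < pval σ a ∧ pval σ a < pval σ b + r := by
  simp only [rinvPairs, mem_filter, mem_product, mem_range]
  omega

lemma snd_ne_of_mem_rinvPairs_insertMax {τ : Perm (Fin m)} {p : Fin (m + 1)} {a b : ℕ}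
    (h : (a, b) ∈ rinvPairs r (insertMax τ p)) : b ≠ p := by
  rintro rfl
  obtain ⟨-, hab, hlt, -⟩ := mem_rinvPairs.mp h
  have := pval_lt (insertMax τ p) (j := a) (by omega)
  rw [pval_insertMax_self] at hlt
  omega

lemma card_rinvPairs_insertMax_fst_ne (τ : Perm (Fin m)) (p : Fin (m + 1)) :
    #{x ∈ rinvPairs r (insertMax τ p) | x.1 ≠ (p : ℕ)} = rinv r τ := by
  have hp := p.isLt
  rw [rinv_eq_card_rinvPairs]
  have hval : ∀ a : ℕ, a ≠ p →
      pval (insertMax τ p) a = pval τ (if a < p then a else a - 1) := by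
    intro a ha
    rw [← pval_insertMax_skip τ p]
    congr 1
    split_ifs <;> omega
  -- closing the gap at position `p` matches the remaining r-inversions with those of `τ`
  refine card_nbij' (fun x => (if x.1 < p then x.1 else x.1 - 1, if x.2 < p then x.2 else x.2 - 1))
    (fun x => (if x.1 < p then x.1 else x.1 + 1, if x.2 < p then x.2 else x.2 + 1)) ?_ ?_ ?_ ?_
  · rintro ⟨a, b⟩ hx
    simp only [mem_coe, mem_filter] at hx
    have hbp := snd_ne_of_mem_rinvPairs_insertMax hx.1
    rw [mem_rinvPairs] at hx
    obtain ⟨⟨hb, hab, hlt, hr⟩, ha⟩ := hx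
    rw [hval a ha, hval b hbp] at hlt hr
    simp only [mem_coe, mem_rinvPairs]
    exact ⟨by split_ifs <;> omega, by split_ifs <;> omega, hlt, hr⟩
  · rintro ⟨a, b⟩ hx
    simp only [mem_coe, mem_rinvPairs] at hx
    obtain ⟨hb, hab, hlt, hr⟩ := hx
    simp only [mem_coe, mem_filter, mem_rinvPairs, pval_insertMax_skip]
    exact ⟨⟨by split_ifs <;> omega, by split_ifs <;> omega, hlt, hr⟩,
      by split_ifs <;> omega⟩
  · rintro ⟨a, b⟩ hx
    simp only [mem_coe, mem_filter] at hx
    have hbp := snd_ne_of_mem_rinvPairs_insertMax hx.1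
    simp only [mem_rinvPairs] at hx
    simp only [Prod.mk.injEq]
    constructor <;> split_ifs <;> omega
  · rintro ⟨a, b⟩ -
    simp only [Prod.mk.injEq]
    constructor <;> split_ifs <;> omega

lemma card_rinvPairs_insertMax_fst_eq (τ : Perm (Fin m)) (p : Fin (m + 1)) :
    #{x ∈ rinvPairs r (insertMax τ p) | x.1 = (p : ℕ)} =
      #{j ∈ bigPositions r τ | (p : ℕ) ≤ j} := by
  refine card_nbij' (fun x => x.2 - 1) (fun j => (p, j + 1)) ?_ ?_ ?_ ?_
  · rintro ⟨a, b⟩ hx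
    simp only [mem_coe, mem_filter, mem_rinvPairs] at hx
    obtain ⟨⟨hb, hab, -, hr⟩, rfl⟩ := hx
    obtain ⟨j, rfl⟩ : ∃ j, b = j + 1 := ⟨b - 1, by omega⟩
    rw [pval_insertMax_self, pval_insertMax_succ _ _ (by omega)] at hr
    simp only [mem_coe, bigPositions, mem_filter, mem_range, add_tsub_cancel_right]
    omega
  · intro j hj
    simp only [mem_coe, bigPositions, mem_filter, mem_range] at hj
    have := pval_lt τ hj.1.1
    simp only [mem_coe, mem_filter, mem_rinvPairs, pval_insertMax_self,
      pval_insertMax_succ _ _ hj.2, and_true]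
    omega
  · rintro ⟨a, b⟩ hx
    simp only [mem_coe, mem_filter, mem_rinvPairs] at hx
    simp only [Prod.mk.injEq]
    omega
  · intro j _
    simp

lemma rinv_insertMax (τ : Perm (Fin m)) (p : Fin (m + 1)) :
    rinv r (insertMax τ p) = rinv r τ + #{j ∈ bigPositions r τ | (p : ℕ) ≤ j} := by
  rw [rinv_eq_card_rinvPairs, ← card_filter_add_card_filter_not (fun x => x.1 = (p : ℕ)),
    card_rinvPairs_insertMax_fst_eq, card_rinvPairs_insertMax_fst_ne, add_comm]

lemma rmaj_insertMax (τ : Perm (Fin m)) (p : Fin (m + 1)) :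
    rmaj r (insertMax τ p) =
      rmaj r τ + #{d ∈ rdesSet r τ | (p : ℕ) ≤ d + 1} +
        #{j ∈ bigPositions r τ | (p : ℕ) ≤ j} +
        if (p : ℕ) ∈ stableSlots r τ then 0 else (p : ℕ) + 1 := by
  rw [rmaj, rmaj, sum_succ_rdesSet_insertMax, rinv_insertMax]
  ring

lemma rmaj_insertMax_of_mem (τ : Perm (Fin m)) {p : Fin (m + 1)}
    (hp : (p : ℕ) ∈ stableSlots r τ) :
    rmaj r (insertMax τ p) = rmaj r τ + #{q ∈ stableSlots r τ | (p : ℕ) < q} := by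
  have h := card_filter_le_stableSlots (r := r) τ p.is_le
  rw [card_filter_le_eq_card_filter_lt_add_one hp] at h
  rw [rmaj_insertMax, if_pos hp]
  omega

lemma rmaj_insertMax_of_notMem (τ : Perm (Fin m)) {p : Fin (m + 1)}
    (hp : (p : ℕ) ∉ stableSlots r τ) :
    rmaj r (insertMax τ p) =
      rmaj r τ + #(stableSlots r τ) +
        #{q ∈ range (m + 1) \ stableSlots r τ | q < (p : ℕ)} := by
  have h₁ := card_filter_le_stableSlots (r := r) τ p.is_le
  have h₂ := card_filter_sdiff_lt_add_card_filter_lt (stableSlots r τ) p.isLt.le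
  have h₃ := card_filter_add_card_filter_not (s := stableSlots r τ) (fun q => (p : ℕ) ≤ q)
  simp only [not_le] at h₃
  rw [rmaj_insertMax, if_neg hp]
  omega

lemma sum_ite_rdes_insertMax (τ : Perm (Fin m)) (k : ℕ) :
    ∑ p, (if rdes r (insertMax τ p) = k then qq ^ rmaj r (insertMax τ p) else 0) =
      (if rdes r τ = k then qq ^ rmaj r τ * qint #(stableSlots r τ) else 0) +
        if rdes r τ + 1 = k then
          qq ^ rmaj r τ * (qq ^ #(stableSlots r τ) * qint (m + 1 - #(stableSlots r τ)))
        else 0 := by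
  set S := stableSlots r τ
  set N := range (m + 1) \ S
  have hS : S ⊆ range (m + 1) := stableSlots_subset_range τ
  have hweight : ∀ p : Fin (m + 1),
      (if rdes r (insertMax τ p) = k then qq ^ rmaj r (insertMax τ p) else 0) =
        if (p : ℕ) ∈ S then
          (if rdes r τ = k then qq ^ rmaj r τ * qq ^ #{q ∈ S | (p : ℕ) < q} else 0)
        else if rdes r τ + 1 = k then
          qq ^ rmaj r τ * (qq ^ #S * qq ^ #{q ∈ N | q < (p : ℕ)})
        else 0 := by
    intro p
    by_cases hp : (p : ℕ) ∈ S
    · rw [rdes_insertMax, if_pos hp, if_pos hp, add_zero, rmaj_insertMax_of_mem τ hp, pow_add]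
    · rw [rdes_insertMax, if_neg hp, if_neg hp, rmaj_insertMax_of_notMem τ hp, pow_add, pow_add,
        mul_assoc]
  rw [sum_congr rfl fun p _ => hweight p, Fin.sum_univ_eq_sum_range (fun P => if P ∈ S then
      (if rdes r τ = k then qq ^ rmaj r τ * qq ^ #{q ∈ S | P < q} else 0) else
      (if rdes r τ + 1 = k then qq ^ rmaj r τ * (qq ^ #S * qq ^ #{q ∈ N | q < P}) else 0)),
    sum_ite, filter_mem_eq_inter, inter_eq_right.mpr hS, filter_notMem_eq_sdiff,
    sum_ite_irrel, sum_ite_irrel, sum_const_zero, sum_const_zero, ← mul_sum, ← mul_sum,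
    ← mul_sum, sum_card_filter_gt, sum_card_filter_lt, card_sdiff_of_subset hS, card_range]
  simp only [qint]

lemma Aq_eq_sum_ite (m k r : ℕ) :
    Aq m k r = ∑ σ : Perm (Fin m), if rdes r σ = k then qq ^ rmaj r σ else 0 :=
  sum_filter _ _

lemma Aq_succ_eq_sum_insertMax (m k r : ℕ) :
    Aq (m + 1) k r = ∑ τ : Perm (Fin m), ∑ p,
      if rdes r (insertMax τ p) = k then qq ^ rmaj r (insertMax τ p) else 0 := by
  rw [Aq_eq_sum_ite, ← insertMax_bijective.sum_comp, Fintype.sum_prod_type]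

lemma Aq_succ_zero (hr : 1 ≤ r) (m : ℕ) :
    Aq (m + 1) 0 r = qint (min r (m + 1)) * Aq m 0 r := by
  rw [Aq_succ_eq_sum_insertMax, Aq_eq_sum_ite, mul_sum]
  refine sum_congr rfl fun τ _ => ?_
  rw [sum_ite_rdes_insertMax, if_neg (Nat.succ_ne_zero _), add_zero, card_stableSlots hr]
  split_ifs with h
  · rw [h, zero_add, mul_comm]
  · rw [mul_zero]

lemma Aq_succ_succ (hr : 1 ≤ r) (m k : ℕ) :
    Aq (m + 1) (k + 1) r =
      qq ^ (k + min r (m + 1)) * qint (m + 1 - (k + min r (m + 1))) * Aq m k r +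
        qint (k + 1 + min r (m + 1)) * Aq m (k + 1) r := by
  rw [Aq_succ_eq_sum_insertMax, Aq_eq_sum_ite m k, Aq_eq_sum_ite m (k + 1), mul_sum, mul_sum,
    ← sum_add_distrib]
  refine sum_congr rfl fun τ _ => ?_
  simp only [sum_ite_rdes_insertMax, card_stableSlots hr, add_left_inj]
  by_cases h₁ : rdes r τ = k + 1
  · simp only [h₁, if_true, Nat.succ_ne_self k, if_false]
    ring
  by_cases h₂ : rdes r τ = k
  · simp only [h₂, if_true, (Nat.succ_ne_self k).symm, if_false]
    ring
  · simp only [h₁, h₂, if_false]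
    ring

lemma Aq_zero (k r : ℕ) : Aq 0 k r = if k = 0 then 1 else 0 := by
  simp [Aq_eq_sum_ite, rmaj, rdes, rdesSet, rinv, eq_comm]

lemma Aq_of_le (hr : 1 ≤ r) (hm : m ≤ r) (k : ℕ) :
    Aq m k r = if k = 0 then qfact m else 0 := by
  induction m generalizing k with
  | zero => simp [Aq_zero, qfact]
  | succ m ih =>
    have hmin : min r (m + 1) = m + 1 := min_eq_right hm
    cases k with
    | zero => rw [Aq_succ_zero hr, hmin, ih (by omega), if_pos rfl, if_pos rfl, qfact, qfact,
        prod_range_succ, mul_comm]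
    | succ k => simp [Aq_succ_succ hr, hmin, ih (by omega), qint]

end Permutations

lemma E_eq_zero_of_lt (α β : ℕ) {n k : ℕ} (h : n < k) : E α β n k = 0 := by
  induction n generalizing k with
  | zero => simp [E, Nat.pos_iff_ne_zero.mp h]
  | succ n ih =>
    obtain ⟨k, rfl⟩ : ∃ j, k = j + 1 := ⟨k - 1, by omega⟩
    rw [E, ih (by omega), ih (by omega), mul_zero, mul_zero, add_zero]

theorem Aq_eq_qfact_mul_E_general (r n k : ℕ) (hr : 1 ≤ r) :
    Aq (n + r) k r = qfact r * E 1 r n k := by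
  induction n generalizing k with
  | zero => rw [zero_add, Aq_of_le hr le_rfl]; cases k <;> simp [E]
  | succ n ih =>
    have hmin : min r (n + r + 1) = r := min_eq_left (by omega)
    rw [show n + 1 + r = n + r + 1 by omega]
    cases k with
    | zero => rw [Aq_succ_zero hr, hmin, ih, E]; ring
    | succ k =>
      have hE : qint (n + r + 1 - (k + r)) * E 1 r n k = qint (n - k + 1) * E 1 r n k := by
        rcases le_or_gt k n with hk | hk
        · rw [show n + r + 1 - (k + r) = n - k + 1 by omega]
        · rw [E_eq_zero_of_lt 1 r hk, mul_zero, mul_zero]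
      rw [Aq_succ_succ hr, hmin, ih, ih, E]
      linear_combination qq ^ (r + k) * qfact r * hE

theorem Aq_eq_qfact_mul_E (r n k : ℕ) (hr : 1 ≤ r) (hk : k ≤ n) :
    Aq (n + r) k r = qfact r * E 1 r n k :=
  Aq_eq_qfact_mul_E_general r n k hr

end
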